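/- arXiv:1001.0515 — 2 statements merged into one kernel-verified Lean document; each statement's English description precedes it below -/
import Mathlib

section
/- Let T be a complete theory, N a saturated model of T, and P a ∅-definable set in N equipped with a distinguished ∅-definable total ordering <. If P is o-minimal in N, then P is 1-stably embedded in N and P has NIP in N. -/
/-!
Formalization of notions and results from A. Pillay,
"Stable embeddedness and NIP" (arXiv:1001.0515).

Conventions: we work in a model `N` of the complete theory `T = Th(N)`
(`N` will be assumed saturated in the theorems below), and `P` is a
`∅`-definable subset of `N`.  "Definable" means definable with parameters
(`Set.Definable` over the parameter set).  Tuples of elements of `N` are used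
to represent elements of `N^eq` (every imaginary is the image of a real tuple
under a `∅`-definable map, so this does not change the notions below).
The induced structure `𝒫` on `P` has as basic relations all subsets of the
`Pⁿ` that are `∅`-definable in `N`; its imaginaries (`𝒫^eq`) are represented
by `∅`-definable equivalence relations on tuples from `P` together with
representatives.
-/

open FirstOrder Language Set Cardinal

namespace StablyEmbeddedPaper

variable {L : FirstOrder.Language} {N : Type} [L.Structure N]



/-- `P` is *stably embedded* in `N`: for every `n`, every subset of `Pⁿ` definable in `N`
with arbitrary parameters is definable in `N` with parameters from `P`. -/
def StablyEmbedded (L : FirstOrder.Language) [L.Structure N] (P : Set N) : Prop :=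
  ∀ (n : ℕ) (s : Set (Fin n → N)), (univ : Set N).Definable L s →
    (∀ f ∈ s, ∀ i, f i ∈ P) → P.Definable L s

/-- `P` is *1-stably embedded* in `N`: every subset of `P` definable in `N` with parameters
is definable with parameters from `P`. -/
def OneStablyEmbedded (L : FirstOrder.Language) [L.Structure N] (P : Set N) : Prop :=
  ∀ s : Set (Fin 1 → N), (univ : Set N).Definable L s →
    (∀ f ∈ s, ∀ i, f i ∈ P) → P.Definable L s

/-- `P` has NIP in `N` (equivalently, in `T = Th(N)`): there are no formula `φ(x̄, y)` with
`x̄` a tuple of variables of sort `P`, tuples `āᵢ ⊆ P` (`i < ω`) and tuples `b_s` (`s ⊆ ω`)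
(tuples of `N` representing arbitrary elements of `N^eq`, each imaginary being the image of a
real tuple under a definable map) such that `N ⊨ φ(āᵢ, b_s)` iff `i ∈ s`. -/
def HasNIPIn (L : FirstOrder.Language) [L.Structure N] (P : Set N) : Prop :=
  ¬ ∃ (n m : ℕ) (φ : L.Formula (Fin n ⊕ Fin m)) (a : ℕ → Fin n → N) (b : Set ℕ → Fin m → N),
      (∀ i k, a i k ∈ P) ∧ ∀ (i : ℕ) (s : Set ℕ), φ.Realize (Sum.elim (a i) (b s)) ↔ i ∈ s

/-- `P` is *stable* in `N`: there are no formula `φ(x̄, y)`, tuples `āᵢ ⊆ P` and tuples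
`bᵢ` from `N` (representing elements of `N^eq`) for `i < ω`, such that
`N ⊨ φ(āᵢ, b_j)` iff `i ≤ j`. -/
def StableIn (L : FirstOrder.Language) [L.Structure N] (P : Set N) : Prop :=
  ¬ ∃ (n m : ℕ) (φ : L.Formula (Fin n ⊕ Fin m)) (a : ℕ → Fin n → N) (b : ℕ → Fin m → N),
      (∀ i k, a i k ∈ P) ∧ ∀ i j : ℕ, φ.Realize (Sum.elim (a i) (b j)) ↔ i ≤ j

/-- Two (possibly infinite) tuples have the same type over the parameter set `A`. -/
def SameTypeOver (L : FirstOrder.Language) [L.Structure N] (A : Set N) {α : Type}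
    (a a' : α → N) : Prop :=
  ∀ (m : ℕ) (φ : L.Formula (α ⊕ Fin m)) (b : Fin m → N), (∀ i, b i ∈ A) →
    (φ.Realize (Sum.elim a b) ↔ φ.Realize (Sum.elim a' b))

/-- A sequence of `m`-tuples is indiscernible over `A`. -/
def IndiscernibleOver (L : FirstOrder.Language) [L.Structure N] (A : Set N) {m : ℕ}
    (bs : ℕ → Fin m → N) : Prop :=
  ∀ (n : ℕ) (f g : Fin n → ℕ), StrictMono f → StrictMono g →
    SameTypeOver L A (fun p : Fin n × Fin m => bs (f p.1) p.2)
      (fun p : Fin n × Fin m => bs (g p.1) p.2)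

/-- The formula `φ(x, b)` divides over `A`: there is an `A`-indiscernible sequence
`(bᵢ)_{i<ω}` with `b₀ = b` such that `{φ(x, bᵢ) : i < ω}` is inconsistent. -/
def Divides (L : FirstOrder.Language) [L.Structure N] {α : Type} {m : ℕ}
    (φ : L.Formula (α ⊕ Fin m)) (b : Fin m → N) (A : Set N) : Prop :=
  ∃ bs : ℕ → Fin m → N, bs 0 = b ∧ IndiscernibleOver L A bs ∧
    ∃ F : Finset ℕ, ¬ ∃ x : α → N, ∀ i ∈ F, φ.Realize (Sum.elim x (bs i))

/-- A definable set (thought of as a formula with parameters) forks over `A`: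
it implies a finite disjunction of formulas, each of which divides over `A`. -/
def SetForksOver (L : FirstOrder.Language) [L.Structure N] {α : Type}
    (s : Set (α → N)) (A : Set N) : Prop :=
  ∃ (J : ℕ) (m : Fin J → ℕ) (φ : ∀ j, L.Formula (α ⊕ Fin (m j))) (b : ∀ j, Fin (m j) → N),
    (∀ j, Divides L (φ j) (b j) A) ∧ ∀ x ∈ s, ∃ j, (φ j).Realize (Sum.elim x (b j))

/-- `tp(a/B)` forks over `A`: the complete type of `a` over `B` implies a finite
disjunction of formulas each of which divides over `A` (equivalently, by compactness,
some `B`-definable set containing `a` forks over `A`). -/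
def TypeForksOver (L : FirstOrder.Language) [L.Structure N] {α : Type}
    (a : α → N) (B A : Set N) : Prop :=
  ∃ s : Set (α → N), B.Definable L s ∧ a ∈ s ∧ SetForksOver L s A

/-- `N` is a saturated model: every set of formulas in one free variable with parameters
from a set of cardinality less than `#N`, which is finitely satisfiable in `N`,
is realized in `N`. -/
def IsSaturated (L : FirstOrder.Language) [L.Structure N] : Prop :=
  ∀ A : Set N, #A < #N →
    ∀ p : Set (Σ m : ℕ, L.Formula (Fin 1 ⊕ Fin m) × (Fin m → N)),
      (∀ q ∈ p, ∀ i, q.2.2 i ∈ A) →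
      (∀ F : Finset (Σ m : ℕ, L.Formula (Fin 1 ⊕ Fin m) × (Fin m → N)), ↑F ⊆ p →
        ∃ x : N, ∀ q ∈ F, q.2.1.Realize (Sum.elim (fun _ => x) q.2.2)) →
      ∃ x : N, ∀ q ∈ p, q.2.1.Realize (Sum.elim (fun _ => x) q.2.2)

/-- The (complete) theory of `N` has NIP: no formula `φ(x̄, ȳ)` has the independence
property (stated in the saturated model `N`). -/
def TheoryHasNIP (L : FirstOrder.Language) (N : Type*) [L.Structure N] : Prop :=
  ¬ ∃ (n m : ℕ) (φ : L.Formula (Fin n ⊕ Fin m)) (a : ℕ → Fin n → N) (b : Set ℕ → Fin m → N),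
      ∀ (i : ℕ) (s : Set ℕ), φ.Realize (Sum.elim (a i) (b s)) ↔ i ∈ s

/-- `P`, with the distinguished `∅`-definable total ordering `lt`, is *o-minimal in `N`*:
every subset of `P` definable in `N` with parameters is a finite union of intervals (with
endpoints in `P`, together with `±∞`) and points. -/
def OMinimalIn (L : FirstOrder.Language) [L.Structure N] (P : Set N)
    (lt : N → N → Prop) : Prop :=
  ∀ s : Set N, Set.Definable₁ (univ : Set N) L s → s ⊆ P →
    ∃ (k : ℕ) (I : Fin k → Set N), s = ⋃ i, I i ∧ ∀ i,
      (∃ a ∈ P, ∃ b ∈ P, I i = {x ∈ P | lt a x ∧ lt x b}) ∨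
      (∃ a ∈ P, I i = {x ∈ P | lt a x}) ∨
      (∃ b ∈ P, I i = {x ∈ P | lt x b}) ∨
      I i = P ∨
      (∃ a ∈ P, I i = {a})

/-!
One-stable embeddedness: a definable subset of `P` is a finite union of intervals and points with
endpoints in `P`, and each of these is definable from its endpoints because `P` and `<` are
`∅`-definable.

NIP: by induction on `n`, no `∅`-definable relation `R(x̄, ȳ)` with `x̄` an `n`-tuple from `P` has
the independence property. Given an independent sequence of `(n+1)`-tuples `aᵢ`, pass to a
subsequence along which one coordinate `qᵢ` is strictly monotone. By o-minimality a definable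
subset of `P` containing infinitely many `qᵢ` contains all but finitely many, so saturation yields
a limit `x` of the `qᵢ` such that every finite Boolean pattern realized by the `aᵢ` is still
realized with `x` in place of that coordinate. With `x` moved among the parameters, saturation
over countable sets turns these finite patterns into an independent sequence of `n`-tuples. `N` is
uncountable, since the parameters `b_s` of an independent sequence are pairwise distinct.
-/

open Filter

theorem _root_.Set.Definable.preimage_sumElim_comp {A : Set N} {α β γ : Type} [Finite β]
    {S : Set (β → N)} (hS : A.Definable L S) (σ : β → α ⊕ γ) {c : γ → N}
    (hc : ∀ g, c g ∈ A) : A.Definable L {v : α → N | Sum.elim v c ∘ σ ∈ S} := by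
  refine hS.preimage_map fun j => ?_
  cases h : σ j with
  | inl i => simpa [h] using DefinableFun.proj (A := A) (L := L) (i := i)
  | inr g => simpa [h] using definableFun_const L α (hc g)

theorem _root_.Set.Definable.setOf_iff {A : Set N} {α : Type} {f : (α → N) → Prop}
    (hS : A.Definable L {v | f v}) (p : Prop) : A.Definable L {v | f v ↔ p} := by
  by_cases hp : p
  · simpa [hp] using hS
  · simp only [hp, iff_false]
    exact hS.compl

theorem _root_.Set.Definable.preimage_cons {A : Set N} {k : ℕ} {S : Set (Fin (k + 1) → N)}
    (hS : A.Definable L S) (y : N) : (insert y A).Definable L {w | Fin.cons y w ∈ S} := by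
  have h := (hS.mono (subset_insert y A)).preimage_sumElim_comp
    (Fin.cons (Sum.inr ()) Sum.inl) (c := fun _ : Unit => y) fun _ => mem_insert y A
  simpa [Fin.comp_cons] using h

theorem _root_.Set.Definable₁.mono {A B : Set N} {P : Set N} (hP : A.Definable₁ L P)
    (hAB : A ⊆ B) : B.Definable₁ L P :=
  Set.Definable.mono hP hAB

theorem _root_.Set.Definable₁.inter {A : Set N} {X Y : Set N} (hX : A.Definable₁ L X)
    (hY : A.Definable₁ L Y) : A.Definable₁ L (X ∩ Y) :=
  Set.Definable.inter hX hY

theorem _root_.Set.Definable₁.univ_pi {A : Set N} {α : Type} [Finite α] {P : Set N}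
    (hP : A.Definable₁ L P) : A.Definable L (univ.pi fun _ : α => P) := by
  simpa [Set.pi, Set.ofPred_forall] using
    definable_iInter_of_finite fun i : α => hP.preimage_comp fun _ => i

theorem definable₁_setOf_rel {A : Set N} {r : N → N → Prop}
    (hr : (∅ : Set N).Definable L {v : Fin 2 → N | r (v 0) (v 1)}) {a : N} (ha : a ∈ A) :
    A.Definable₁ L {x | r a x} ∧ A.Definable₁ L {x | r x a} := by
  have hrA := hr.mono (empty_subset A)
  constructor
  · show A.Definable L {v : Fin 1 → N | r a (v 0)}
    simpa using hrA.preimage_sumElim_comp ![Sum.inr 0, Sum.inl (0 : Fin 1)]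
      (c := fun _ : Fin 1 => a) fun _ => ha
  · show A.Definable L {v : Fin 1 → N | r (v 0) a}
    simpa using hrA.preimage_sumElim_comp ![Sum.inl (0 : Fin 1), Sum.inr 0]
      (c := fun _ : Fin 1 => a) fun _ => ha

theorem exists_formula_of_definable {A : Set N} {α : Type} {S : Set (α → N)}
    (h : A.Definable L S) :
    ∃ (m : ℕ) (φ : L.Formula (α ⊕ Fin m)) (c : Fin m → N),
      (∀ j, c j ∈ A) ∧ S = {x | φ.Realize (Sum.elim x c)} := by
  obtain ⟨A₀, hA₀, hdef⟩ := definable_iff_finitely_definable.mp h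
  obtain ⟨φ, rfl⟩ := definable_iff_exists_formula_sum.mp hdef
  let e := Fintype.equivFin (A₀ : Set N)
  refine ⟨_, φ.relabel (Sum.elim (Sum.inr ∘ e) Sum.inl), fun j => e.symm j,
    fun j => hA₀ (e.symm j).2, ?_⟩
  ext x
  simp only [mem_ofPred_eq, Formula.realize_relabel]
  congr! 1
  ext (a | i) <;> simp

theorem mk_iUnion_range_lt {ι : Type*} [Countable ι] {m : ℕ} (hN : ℵ₀ < #N)
    (c : ι → Fin m → N) : #(⋃ t, range (c t)) < #N :=
  (mk_le_aleph0_iff.mpr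
    (countable_iUnion fun t => (finite_range (c t)).countable).to_subtype).trans_lt hN

theorem IsSaturated.nonempty_iInter_of_fin_one (hsat : IsSaturated L (N := N)) {A : Set N}
    (hA : #A < #N) {ι : Type*} (S : ι → Set (Fin 1 → N)) (hS : ∀ i, A.Definable L (S i))
    (hfin : ∀ T : Finset ι, (⋂ i ∈ T, S i).Nonempty) : (⋂ i, S i).Nonempty := by
  classical
  choose m φ c hc hφ using fun i => exists_formula_of_definable (hS i)
  let enc : ι → Σ m : ℕ, L.Formula (Fin 1 ⊕ Fin m) × (Fin m → N) :=
    fun i => ⟨m i, φ i, c i⟩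
  have hreal : ∀ i x, (enc i).2.1.Realize (Sum.elim (fun _ => x) (enc i).2.2) ↔
      (fun _ => x) ∈ S i := fun i x => by rw [hφ i]; rfl
  obtain ⟨x, hx⟩ := hsat A hA (range enc) (by rintro _ ⟨i, rfl⟩; exact hc i) fun F hF => by
    obtain ⟨T, -, rfl⟩ := Finset.subset_set_image_iff.mp (image_univ.symm ▸ hF)
    obtain ⟨v, hv⟩ := hfin T
    refine ⟨v 0, ?_⟩
    simp only [Finset.mem_image, forall_exists_index, and_imp]
    rintro _ i hi rfl
    rw [hreal]
    convert mem_iInter₂.mp hv i hi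
  exact ⟨fun _ => x, mem_iInter.mpr fun i => (hreal i x).mp (hx _ ⟨i, rfl⟩)⟩

theorem IsSaturated.nonempty_iInter (hsat : IsSaturated L (N := N)) (hN : ℵ₀ ≤ #N) {k : ℕ}
    {A : Set N} (hA : #A < #N) {ι : Type*} (S : ι → Set (Fin k → N))
    (hS : ∀ i, A.Definable L (S i)) (hfin : ∀ T : Finset ι, (⋂ i ∈ T, S i).Nonempty) :
    (⋂ i, S i).Nonempty := by
  induction k generalizing A ι with
  | zero =>
    refine ⟨finZeroElim, mem_iInter.mpr fun i => ?_⟩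
    obtain ⟨v, hv⟩ := hfin {i}
    rw [Finset.set_biInter_singleton] at hv
    rwa [Subsingleton.elim v finZeroElim] at hv
  | succ k ih =>
    classical
    -- realize the first coordinate, then the others over one more parameter
    let head : Finset ι → Set (Fin 1 → N) := fun T =>
      (fun v : Fin (k + 1) → N => v ∘ fun _ => 0) '' ⋂ i ∈ T, S i
    obtain ⟨y, hy⟩ := hsat.nonempty_iInter_of_fin_one hA head
      (fun T => (definable_biInter_finset hS T).image_comp _) fun 𝒯 => by
        obtain ⟨v, hv⟩ := hfin (𝒯.biUnion id)
        exact ⟨v ∘ fun _ => 0, mem_iInter₂.mpr fun T hT => mem_image_of_mem _ <|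
          mem_iInter₂.mpr fun i hi => mem_iInter₂.mp hv i (Finset.mem_biUnion.mpr ⟨T, hT, hi⟩)⟩
    have hyA : #(insert (y 0) A : Set N) < #N :=
      mk_insert_le.trans_lt (add_lt_of_lt hN hA (one_lt_aleph0.trans_le hN))
    obtain ⟨w, hw⟩ := ih hyA (fun i => {w | Fin.cons (y 0) w ∈ S i})
      (fun i => (hS i).preimage_cons (y 0)) fun T => by
        obtain ⟨v, hv, hvy⟩ := mem_iInter.mp hy T
        refine ⟨Fin.tail v, mem_iInter₂.mpr fun i hi => ?_⟩
        rw [mem_ofPred_eq, ← hvy]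
        exact (Fin.cons_self_tail v).symm ▸ mem_iInter₂.mp hv i hi
    exact ⟨Fin.cons (y 0) w, mem_iInter.mpr fun i => mem_iInter.mp hw i⟩

theorem exists_injective_comp_coord {n : ℕ} {a : ℕ → Fin n → N}
    (ha : Function.Injective a) :
    ∃ (k : Fin n) (σ : ℕ → ℕ), Function.Injective fun i => a (σ i) k := by
  obtain ⟨k, hk⟩ : ∃ k, (range fun i => a i k).Infinite := by
    by_contra! h
    exact infinite_range_of_injective ha <| (Finite.pi' h).subset <| by
      rintro _ ⟨i, rfl⟩ k
      exact ⟨i, rfl⟩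
  have := hk.to_subtype
  choose σ hσ using fun t => (Infinite.natEmbedding (range fun i => a i k) t).2
  exact ⟨k, σ, fun s t hst => (Infinite.natEmbedding _).injective <| Subtype.ext <| by
    simpa [hσ] using hst⟩

def IsIndependentFamily {ι : Type*} (I : ι → Set ℕ) : Prop :=
  ∀ (T : Finset ι) (η : ι → Prop), {i | ∀ t ∈ T, i ∈ I t ↔ η t}.Infinite

theorem exists_isIndependentFamily (ι : Type*) [Encodable ι] :
    ∃ I : ι → Set ℕ, IsIndependentFamily I := by
  classical
  -- `i` codes the finite set of `t` with `i ∈ I t` in the first component of `Nat.unpair i`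
  refine ⟨fun t => {i | t ∈ (Encodable.decode i.unpair.1 : Option (Finset ι)).getD ∅},
    fun T η => infinite_of_injective_forall_mem
      (f := fun j => Nat.pair (Encodable.encode (T.filter η)) j)
      (fun _ _ h => (Nat.pair_eq_pair.mp h).2) fun j t ht => ?_⟩
  simp [Encodable.encodek, ht]

theorem sumElim_cons_comp {n m : ℕ} (k₀ : Fin (n + 1)) (x : N) (w : Fin n → N)
    (d : Fin m → N) :
    Sum.elim w (Fin.cons x d) ∘
        Sum.elim (Fin.insertNth k₀ (Sum.inr 0) Sum.inl) (Sum.inr ∘ Fin.succ) =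
      Sum.elim (Fin.insertNth k₀ x w) d := by
  ext (k | j)
  · rcases Fin.eq_self_or_eq_succAbove k₀ k with rfl | ⟨k, rfl⟩ <;> simp
  · simp

def OrdConnectedIn (P : Set N) (lt : N → N → Prop) (C : Set N) : Prop :=
  ∀ x ∈ C, ∀ y ∈ C, ∀ z ∈ P, lt x z → lt z y → z ∈ C

def IsStrictMonoOrAnti (lt : N → N → Prop) (q : ℕ → N) : Prop :=
  (∀ i j, i < j → lt (q i) (q j)) ∨ ∀ i j, i < j → lt (q j) (q i)

def HasIPOfArity (L : FirstOrder.Language) [L.Structure N] (P : Set N) (n : ℕ) : Prop :=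
  ∃ (m : ℕ) (R : Set (Fin n ⊕ Fin m → N)) (a : ℕ → Fin n → N) (b : Set ℕ → Fin m → N),
    (∅ : Set N).Definable L R ∧ (∀ i k, a i k ∈ P) ∧
      ∀ i s, Sum.elim (a i) (b s) ∈ R ↔ i ∈ s

def ShattersFinitely {n m : ℕ} {ι : Type*} (P : Set N) (R : Set (Fin n ⊕ Fin m → N))
    (B : ι → Fin m → N) : Prop :=
  ∀ (T : Finset ι) (η : ι → Prop),
    ∃ w : Fin n → N, (∀ k, w k ∈ P) ∧ ∀ t ∈ T, (Sum.elim w (B t) ∈ R ↔ η t)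

section

variable {P : Set N} {lt : N → N → Prop}

theorem oneStablyEmbedded_of_oMinimalIn (hPdef : (∅ : Set N).Definable₁ L P)
    (hltdef : (∅ : Set N).Definable L {v : Fin 2 → N | lt (v 0) (v 1)})
    (homin : OMinimalIn L P lt) : OneStablyEmbedded L P := by
  intro s hs hsP
  set X : Set N := {x | (fun _ => x) ∈ s}
  have hs' : s = {v | v 0 ∈ X} := by
    ext v
    rw [mem_ofPred_eq, mem_ofPred_eq, funext (Fin.forall_fin_one.mpr rfl : ∀ i, v 0 = v i)]
  obtain ⟨k, I, hXI, hI⟩ := homin X (show univ.Definable L {v | v 0 ∈ X} from hs' ▸ hs)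
    fun x hx => hsP _ hx 0
  rw [hs', hXI, show {v : Fin 1 → N | v 0 ∈ ⋃ i, I i} = ⋃ i, {v | v 0 ∈ I i} by ext; simp]
  refine definable_iUnion_of_finite fun i => ?_
  have hP := hPdef.mono (empty_subset P)
  rcases hI i with ⟨a, ha, b, hb, h⟩ | ⟨a, ha, h⟩ | ⟨b, hb, h⟩ | h | ⟨a, ha, h⟩ <;> rw [h]
  · exact hP.inter
      ((definable₁_setOf_rel hltdef ha).1.inter (definable₁_setOf_rel hltdef hb).2)
  · exact hP.inter (definable₁_setOf_rel hltdef ha).1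
  · exact hP.inter (definable₁_setOf_rel hltdef hb).2
  · exact hP
  · exact Definable.singleton_of_mem L ha

theorem OMinimalIn.exists_eq_iUnion_ordConnectedIn (homin : OMinimalIn L P lt)
    (hirr : ∀ x ∈ P, ¬ lt x x)
    (htrans : ∀ x ∈ P, ∀ y ∈ P, ∀ z ∈ P, lt x y → lt y z → lt x z)
    {X : Set N} (hX : (univ : Set N).Definable₁ L X) (hXP : X ⊆ P) :
    ∃ (k : ℕ) (I : Fin k → Set N), X = ⋃ i, I i ∧ ∀ i, OrdConnectedIn P lt (I i) := by
  obtain ⟨k, I, hXI, hI⟩ := homin X hX hXP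
  refine ⟨k, I, hXI, fun i => ?_⟩
  rcases hI i with ⟨a, ha, b, hb, hIi⟩ | ⟨a, ha, hIi⟩ | ⟨b, hb, hIi⟩ | hIi | ⟨a, ha, hIi⟩ <;>
    rw [hIi]
  · rintro x ⟨hx, hax, -⟩ y ⟨hy, -, hyb⟩ z hz hxz hzy
    exact ⟨hz, htrans a ha x hx z hz hax hxz, htrans z hz y hy b hb hzy hyb⟩
  · rintro x ⟨hx, hax⟩ y - z hz hxz -
    exact ⟨hz, htrans a ha x hx z hz hax hxz⟩
  · rintro x - y ⟨hy, hyb⟩ z hz - hzy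
    exact ⟨hz, htrans z hz y hy b hb hzy hyb⟩
  · exact fun _ _ _ _ z hz _ _ => hz
  · intro x hx y hy z hz hxz hzy
    rw [mem_singleton_iff] at hx hy
    exact absurd (htrans a ha z hz a ha (hx ▸ hxz) (hy ▸ hzy)) (hirr a ha)

theorem OMinimalIn.eventually_mem_of_frequently_mem (homin : OMinimalIn L P lt)
    (hirr : ∀ x ∈ P, ¬ lt x x)
    (htrans : ∀ x ∈ P, ∀ y ∈ P, ∀ z ∈ P, lt x y → lt y z → lt x z)
    {q : ℕ → N} (hq : ∀ i, q i ∈ P) (hmono : IsStrictMonoOrAnti lt q)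
    {X : Set N} (hX : (univ : Set N).Definable₁ L X) (hXP : X ⊆ P)
    (hfreq : ∃ᶠ i in atTop, q i ∈ X) : ∀ᶠ i in atTop, q i ∈ X := by
  obtain ⟨k, I, rfl, hI⟩ := homin.exists_eq_iUnion_ordConnectedIn hirr htrans hX hXP
  obtain ⟨t, ht⟩ : ∃ t, ∃ᶠ i in atTop, q i ∈ I t := by
    by_contra! h
    exact hfreq ((eventually_all.mpr h).mono fun i hi => by simpa using hi)
  obtain ⟨i₀, hi₀⟩ := ht.exists
  refine eventually_atTop.mpr ⟨i₀, fun i hi => mem_iUnion.mpr ⟨t, ?_⟩⟩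
  rcases hi.eq_or_lt with rfl | hlt
  · exact hi₀
  obtain ⟨j, hj, hjt⟩ := frequently_atTop.mp ht (i + 1)
  rcases hmono with hinc | hdec
  · exact hI t _ hi₀ _ hjt _ (hq i) (hinc _ _ hlt) (hinc _ _ hj)
  · exact hI t _ hjt _ hi₀ _ (hq i) (hdec _ _ hj) (hdec _ _ hlt)

theorem exists_strictMono_isStrictMonoOrAnti_comp
    (htrans : ∀ x ∈ P, ∀ y ∈ P, ∀ z ∈ P, lt x y → lt y z → lt x z)
    (htotal : ∀ x ∈ P, ∀ y ∈ P, lt x y ∨ x = y ∨ lt y x)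
    {q : ℕ → N} (hq : ∀ i, q i ∈ P) (hinj : Function.Injective q) :
    ∃ g : ℕ → ℕ, StrictMono g ∧ IsStrictMonoOrAnti lt (q ∘ g) := by
  have : IsTrans ℕ fun i j => lt (q i) (q j) :=
    ⟨fun i j l => htrans _ (hq i) _ (hq j) _ (hq l)⟩
  obtain ⟨g, hinc | hninc⟩ :=
    exists_increasing_or_nonincreasing_subseq (fun i j => lt (q i) (q j)) id
  · exact ⟨g, g.strictMono, Or.inl hinc⟩
  refine ⟨g, g.strictMono, Or.inr fun i j hij => ?_⟩
  rcases htotal _ (hq (g i)) _ (hq (g j)) with h | h | h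
  · exact absurd h (hninc i j hij)
  · exact absurd (g.injective (hinj h)) hij.ne
  · exact h

theorem hasNIPIn_of_forall_not_hasIPOfArity (h : ∀ n, ¬ HasIPOfArity L P n) :
    HasNIPIn L P := by
  rintro ⟨n, m, φ, a, b, ha, hab⟩
  exact h n ⟨m, Set.ofPred φ.Realize, a, b, empty_definable_iff.mpr ⟨φ, rfl⟩, ha, hab⟩

theorem not_hasIPOfArity_zero : ¬ HasIPOfArity L P 0 := by
  rintro ⟨m, R, a, b, -, -, hab⟩
  have h : Sum.elim (a 1) (b {0}) ∈ R :=
    Subsingleton.elim (a 0) (a 1) ▸ (hab 0 {0}).mpr rfl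
  exact one_ne_zero ((hab 1 {0}).mp h)

theorem HasIPOfArity.aleph0_lt_mk {n : ℕ} (h : HasIPOfArity L P n) : ℵ₀ < #N := by
  obtain ⟨m, R, a, b, -, -, hab⟩ := h
  have hb : Function.Injective b := fun s t hst => Set.ext fun i => by
    rw [← hab, ← hab, hst]
  by_contra! hN
  have : Countable N := mk_le_aleph0_iff.mp hN
  have := (mk_le_of_injective hb).trans (mk_le_aleph0 (α := Fin m → N))
  rw [mk_set, mk_nat] at this
  exact (cantor ℵ₀).not_ge this

theorem HasIPOfArity.exists_chain
    (htrans : ∀ x ∈ P, ∀ y ∈ P, ∀ z ∈ P, lt x y → lt y z → lt x z)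
    (htotal : ∀ x ∈ P, ∀ y ∈ P, lt x y ∨ x = y ∨ lt y x)
    {n : ℕ} (h : HasIPOfArity L P (n + 1)) :
    ∃ (m : ℕ) (R : Set (Fin n ⊕ Fin (m + 1) → N)) (a : ℕ → Fin n → N) (q : ℕ → N)
      (b : Set ℕ → Fin m → N), (∅ : Set N).Definable L R ∧ (∀ i k, a i k ∈ P) ∧
      (∀ i, q i ∈ P) ∧ IsStrictMonoOrAnti lt q ∧
      ∀ i s, Sum.elim (a i) (Fin.cons (q i) (b s)) ∈ R ↔ i ∈ s := by
  obtain ⟨m, R, a, b, hR, ha, hab⟩ := h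
  have hinj : Function.Injective a := fun i j hij =>
    ((hab j {i}).mp (hij ▸ (hab i {i}).mpr rfl)).symm
  obtain ⟨k₀, σ, hσ⟩ := exists_injective_comp_coord hinj
  obtain ⟨g, hg, hmono⟩ := exists_strictMono_isStrictMonoOrAnti_comp htrans htotal
    (fun i => ha (σ i) k₀) hσ
  have hτ : Function.Injective (σ ∘ g) := fun i j hij =>
    (hσ.comp hg.injective) (congrArg (fun i => a i k₀) hij)
  refine ⟨m, {v | v ∘ Sum.elim (Fin.insertNth k₀ (Sum.inr 0) Sum.inl) (Sum.inr ∘ Fin.succ) ∈ R},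
    fun i => Fin.removeNth k₀ (a (σ (g i))), fun i => a (σ (g i)) k₀,
    fun s => b ((σ ∘ g) '' s), hR.preimage_comp _, fun i k => ha _ _, fun i => ha _ _, hmono,
    fun i s => ?_⟩
  rw [mem_ofPred_eq, sumElim_cons_comp, Fin.insertNth_self_removeNth, ← hτ.mem_set_image]
  exact hab _ _

theorem definable₁_setOf_exists_pattern {n m : ℕ} {A : Set N}
    (hPdef : (∅ : Set N).Definable₁ L P) {R : Set (Fin n ⊕ Fin (m + 1) → N)}
    (hR : (∅ : Set N).Definable L R) {ι : Type*} {c : ι → Fin m → N}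
    (hc : ∀ t j, c t j ∈ A) (T : Finset ι) (η : ι → Prop) :
    A.Definable₁ L {y | y ∈ P ∧ ∃ w : Fin n → N, (∀ k, w k ∈ P) ∧
      ∀ t ∈ T, (Sum.elim w (Fin.cons y (c t)) ∈ R ↔ η t)} := by
  have hPA := hPdef.mono (empty_subset A)
  let σ : Fin n ⊕ Fin (m + 1) → (Fin 1 ⊕ Fin n) ⊕ Fin m :=
    Sum.elim (Sum.inl ∘ Sum.inr) (Fin.cons (Sum.inl (Sum.inl 0)) Sum.inr)
  have hσ : ∀ u t, Sum.elim u (c t) ∘ σ =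
      Sum.elim (u ∘ Sum.inr) (Fin.cons (u (Sum.inl 0)) (c t)) := fun u t => by
    simp only [σ, Sum.comp_elim, Fin.comp_cons, Sum.elim_inl, Sum.elim_comp_inr]
    rfl
  have hW : A.Definable L {u : Fin 1 ⊕ Fin n → N | (∀ k, u (Sum.inr k) ∈ P) ∧
      ∀ t ∈ T, (Sum.elim (u ∘ Sum.inr) (Fin.cons (u (Sum.inl 0)) (c t)) ∈ R ↔ η t)} := by
    have hPi := hPA.univ_pi (α := Fin n) |>.preimage_comp (Sum.inr : Fin n → Fin 1 ⊕ Fin n)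
    have hRt := fun t =>
      ((hR.mono (empty_subset A)).preimage_sumElim_comp σ (hc t)).setOf_iff (η t)
    convert hPi.inter (definable_biInter_finset hRt T) using 1
    ext u
    simp only [hσ, mem_inter_iff, mem_preimage, mem_univ_pi, mem_iInter₂, mem_ofPred_eq,
      Function.comp_apply]
  rw [Definable₁]
  convert Set.Definable.inter hPA hW.exists_of_finite using 1
  ext v
  simp [Function.comp_def]

/-- `x` is a limit of the chain `q`: put in place of `q i`, it still realizes every finite
pattern of the independent family `I`. -/
theorem exists_shattersFinitely_of_chain (hsat : IsSaturated L (N := N)) (hN : ℵ₀ < #N)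
    (homin : OMinimalIn L P lt) (hirr : ∀ x ∈ P, ¬ lt x x)
    (htrans : ∀ x ∈ P, ∀ y ∈ P, ∀ z ∈ P, lt x y → lt y z → lt x z)
    (hPdef : (∅ : Set N).Definable₁ L P) {n m : ℕ} {R : Set (Fin n ⊕ Fin (m + 1) → N)}
    (hR : (∅ : Set N).Definable L R) {a : ℕ → Fin n → N} {q : ℕ → N}
    {b : Set ℕ → Fin m → N} (ha : ∀ i k, a i k ∈ P) (hq : ∀ i, q i ∈ P)
    (hmono : IsStrictMonoOrAnti lt q)
    (hab : ∀ i s, Sum.elim (a i) (Fin.cons (q i) (b s)) ∈ R ↔ i ∈ s)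
    {ι : Type*} [Countable ι] {I : ι → Set ℕ} (hI : IsIndependentFamily I) :
    ∃ x, ShattersFinitely P R fun t => Fin.cons x (b (I t)) := by
  set A := ⋃ t, range (b (I t))
  let X : Finset ι × (ι → Prop) → Set N := fun Tη => {y | y ∈ P ∧ ∃ w : Fin n → N,
    (∀ k, w k ∈ P) ∧ ∀ t ∈ Tη.1, (Sum.elim w (Fin.cons y (b (I t))) ∈ R ↔ Tη.2 t)}
  have hX : ∀ Tη, A.Definable₁ L (X Tη) := fun Tη =>
    definable₁_setOf_exists_pattern hPdef hR
      (fun t j => mem_iUnion_of_mem t (mem_range_self j)) Tη.1 Tη.2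
  have hqX : ∀ Tη, ∀ᶠ i in atTop, q i ∈ X Tη := fun Tη => by
    refine homin.eventually_mem_of_frequently_mem hirr htrans hq hmono
      ((hX Tη).mono (subset_univ A)) (fun _ hy => hy.1) ?_
    exact (Nat.frequently_atTop_iff_infinite.mpr (hI Tη.1 Tη.2)).mono fun i hi =>
      ⟨hq i, a i, ha i, fun t ht => (hab i (I t)).trans (hi t ht)⟩
  obtain ⟨x, hx⟩ := hsat.nonempty_iInter hN.le (mk_iUnion_range_lt hN _)
    (fun Tη => {v : Fin 1 → N | v 0 ∈ X Tη}) hX fun 𝒯 => by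
      obtain ⟨i, hi⟩ := ((eventually_all_finset 𝒯).mpr fun Tη _ => hqX Tη).exists
      exact ⟨fun _ => q i, mem_iInter₂.mpr hi⟩
  refine ⟨x 0, fun T η => ?_⟩
  obtain ⟨-, hw⟩ := mem_iInter.mp hx (T, η)
  exact hw

theorem hasIPOfArity_of_shattersFinitely (hsat : IsSaturated L (N := N)) (hN : ℵ₀ < #N)
    (hPdef : (∅ : Set N).Definable₁ L P) {n k : ℕ} {R : Set (Fin n ⊕ Fin k → N)}
    (hR : (∅ : Set N).Definable L R) {B : Finset ℕ → Fin k → N}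
    (hB : ShattersFinitely P R B) : HasIPOfArity L P n := by
  classical
  have hw : ∀ j : ℕ, ∃ w : Fin n → N, (∀ k, w k ∈ P) ∧
      ∀ V, (Sum.elim w (B V) ∈ R ↔ j ∈ V) := fun j => by
    obtain ⟨w, hw⟩ := hsat.nonempty_iInter hN.le (mk_iUnion_range_lt hN B)
      (fun V => (univ.pi fun _ => P) ∩ {w | Sum.elim w (B V) ∈ R ↔ j ∈ V})
      (fun V => ((hPdef.mono (empty_subset _)).univ_pi).inter
        (((hR.mono (empty_subset _)).preimage_sumElim_comp id
          fun g => mem_iUnion_of_mem V (mem_range_self g)).setOf_iff _))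
      fun T => by
        obtain ⟨w, hwP, hwT⟩ := hB T (j ∈ ·)
        exact ⟨w, mem_iInter₂.mpr fun V hV => ⟨fun k _ => hwP k, hwT V hV⟩⟩
    exact ⟨w, fun k => (mem_iInter.mp hw ∅).1 k (mem_univ k), fun V => (mem_iInter.mp hw V).2⟩
  choose w hwP hwR using hw
  have hd : ∀ s : Set ℕ, ∃ d : Fin k → N, ∀ j, (Sum.elim (w j) d ∈ R ↔ j ∈ s) := fun s => by
    obtain ⟨d, hd⟩ := hsat.nonempty_iInter hN.le (mk_iUnion_range_lt hN w)
      (fun j => {d | Sum.elim (w j) d ∈ R ↔ j ∈ s})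
      (fun j => by
        simpa only [Sum.elim_swap] using ((hR.mono (empty_subset _)).preimage_sumElim_comp
          Sum.swap fun g => mem_iUnion_of_mem j (mem_range_self g)).setOf_iff (j ∈ s))
      fun T => by
        -- on the rows `j ∈ T`, the parameter `B (T ∩ s)` cuts out exactly `s`
        refine ⟨B (T.filter (· ∈ s)), mem_iInter₂.mpr fun j hj => ?_⟩
        simp [hwR, hj]
    exact ⟨d, mem_iInter.mp hd⟩
  choose d hd using hd
  exact ⟨k, R, w, d, hR, hwP, fun j s => hd s j⟩

theorem HasIPOfArity.of_succ (hsat : IsSaturated L (N := N)) (homin : OMinimalIn L P lt)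
    (hirr : ∀ x ∈ P, ¬ lt x x)
    (htrans : ∀ x ∈ P, ∀ y ∈ P, ∀ z ∈ P, lt x y → lt y z → lt x z)
    (htotal : ∀ x ∈ P, ∀ y ∈ P, lt x y ∨ x = y ∨ lt y x)
    (hPdef : (∅ : Set N).Definable₁ L P) {n : ℕ} (h : HasIPOfArity L P (n + 1)) :
    HasIPOfArity L P n := by
  have hN := h.aleph0_lt_mk
  obtain ⟨m, R, a, q, b, hR, ha, hq, hmono, hab⟩ := h.exists_chain htrans htotal
  obtain ⟨I, hI⟩ := exists_isIndependentFamily (Finset ℕ)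
  obtain ⟨x, hx⟩ :=
    exists_shattersFinitely_of_chain hsat hN homin hirr htrans hPdef hR ha hq hmono hab hI
  exact hasIPOfArity_of_shattersFinitely hsat hN hPdef hR hx

end

/-- **Remark 1.2(ii).**  Let `T` be a complete theory, `N` a saturated model of `T`, and
`P` a `∅`-definable set in `N` equipped with a distinguished `∅`-definable total ordering
`<`.  If `P` is o-minimal in `N`, then `P` is 1-stably embedded in `N` and `P` has NIP
in `N`. -/
theorem oneStablyEmbedded_and_hasNIPIn_of_oMinimal
    (hsat : IsSaturated (N := N) L) (P : Set N)
    (hPdef : Set.Definable₁ (∅ : Set N) L P)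
    (lt : N → N → Prop)
    (hltdef : Set.Definable (∅ : Set N) L {v : Fin 2 → N | lt (v 0) (v 1)})
    (hirr : ∀ x ∈ P, ¬ lt x x)
    (htrans : ∀ x ∈ P, ∀ y ∈ P, ∀ z ∈ P, lt x y → lt y z → lt x z)
    (htotal : ∀ x ∈ P, ∀ y ∈ P, lt x y ∨ x = y ∨ lt y x)
    (homin : OMinimalIn L P lt) :
    OneStablyEmbedded L P ∧ HasNIPIn L P := by
  refine ⟨oneStablyEmbedded_of_oMinimalIn hPdef hltdef homin,
    hasNIPIn_of_forall_not_hasIPOfArity fun n => ?_⟩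
  induction n with
  | zero => exact not_hasIPOfArity_zero
  | succ n ih => exact fun h => ih (h.of_succ hsat homin hirr htrans htotal hPdef)

end StablyEmbeddedPaper
end

section
/- Let T be a complete theory, N a saturated model of T, and P a ∅-definable set in N which is 1-stably embedded in N and such that every definable (with parameters in N) function from P to a sort Z of 𝒫^eq is coded in P. Then for every n, every subset of P^n definable in N with parameters is coded in P; that is, P is stably embedded in N. (This is the inductive step deducing Theorem 1.4 from Proposition 3.1: if X ⊆ P^{n+1} is definable in N and every definable subset of P^n is coded in P, then using a uniform formula ψ(x_1,…,x_n,z) over a sort Z of 𝒫^eq and the definable function a ↦ c_a assigning to a ∈ P the canonical parameter of the fiber X_a ⊆ P^n, the set X is coded in P.) -/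
/-!
Formalization of notions and results from A. Pillay,
"Stable embeddedness and NIP" (arXiv:1001.0515).

Conventions: we work in a model `N` of the complete theory `T = Th(N)`
(`N` will be assumed saturated in the theorems below), and `P` is a
`∅`-definable subset of `N`.  "Definable" means definable with parameters
(`Set.Definable` over the parameter set).  Tuples of elements of `N` are used
to represent elements of `N^eq` (every imaginary is the image of a real tuple
under a `∅`-definable map, so this does not change the notions below).
The induced structure `𝒫` on `P` has as basic relations all subsets of the
`Pⁿ` that are `∅`-definable in `N`; its imaginaries (`𝒫^eq`) are represented
by `∅`-definable equivalence relations on tuples from `P` together with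
representatives.
-/

open FirstOrder Language Set Cardinal

namespace StablyEmbeddedPaper

variable {L : FirstOrder.Language} {N : Type} [L.Structure N]



/-! ### Sorts of `𝒫^eq` and imaginaries -/

/-- A sort `Z` of `𝒫^eq`: a `∅`-definable (in `N`) equivalence relation on `n`-tuples
from `P`.  Elements of the sort are the equivalence classes. -/
structure EqRel (L : FirstOrder.Language) (N : Type) [L.Structure N] (P : Set N) where
  n : ℕ
  rel : Set ((Fin n ⊕ Fin n) → N)
  definable : Set.Definable (∅ : Set N) L rel
  mem_P : ∀ g ∈ rel, ∀ i, g i ∈ P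
  refl : ∀ f : Fin n → N, (∀ i, f i ∈ P) → Sum.elim f f ∈ rel
  symm : ∀ f g : Fin n → N, Sum.elim f g ∈ rel → Sum.elim g f ∈ rel
  trans : ∀ f g h : Fin n → N, Sum.elim f g ∈ rel → Sum.elim g h ∈ rel → Sum.elim f h ∈ rel

/-- An element of `𝒫^eq`: an element of the sort `E`, given by a representative
tuple from `P` (the element itself is the `E`-class of the representative). -/
structure Imag (L : FirstOrder.Language) (N : Type) [L.Structure N] (P : Set N) where
  E : EqRel L N P
  rep : Fin E.n → N
  repP : ∀ i, rep i ∈ P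

variable {P : Set N}

/-- Two representatives define the same element of `𝒫^eq`. -/
def Imag.eqv (a b : Imag L N P) : Prop :=
  ∃ h : a.E = b.E, Sum.elim a.rep (fun i => b.rep (Fin.cast (congrArg EqRel.n h) i)) ∈ a.E.rel

/-- An automorphism of the induced structure `𝒫`: a permutation of `P` preserving all
relations of `𝒫`, i.e. all subsets of the `Pⁿ` that are `∅`-definable in `N`. -/
def IsPAut (L : FirstOrder.Language) [L.Structure N] (P : Set N) (σ : ↥P ≃ ↥P) : Prop :=
  ∀ (n : ℕ) (s : Set (Fin n → N)), Set.Definable (∅ : Set N) L s →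
    ∀ f : Fin n → ↥P, ((fun i => (f i : N)) ∈ s ↔ (fun i => (σ (f i) : N)) ∈ s)

/-- The action of an automorphism of `𝒫` on imaginaries. -/
def Imag.map (σ : ↥P ≃ ↥P) (a : Imag L N P) : Imag L N P :=
  ⟨a.E, fun i => (σ ⟨a.rep i, a.repP i⟩ : N), fun i => (σ ⟨a.rep i, a.repP i⟩).2⟩

/-- `σ` fixes each imaginary in `B` (as an equivalence class). -/
def FixesImagSet (σ : ↥P ≃ ↥P) (B : Set (Imag L N P)) : Prop :=
  ∀ b ∈ B, (Imag.map σ b).eqv b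

/-- `σ` fixes the set `A ⊆ P` pointwise. -/
def FixesPointwise (σ : ↥P ≃ ↥P) (A : Set N) : Prop :=
  ∀ x : ↥P, (x : N) ∈ A → σ x = x

/-- The imaginary `a` is algebraic over the set `B` of imaginaries: its orbit under the
automorphisms of `𝒫` fixing `B` is finite.  (In the saturated structure `𝒫` this is
equivalent to the usual formula-theoretic definition of `acl` in `𝒫^eq`.) -/
def AclImag (L : FirstOrder.Language) [L.Structure N] (P : Set N) (B : Set (Imag L N P))
    (a : Imag L N P) : Prop :=
  ∃ l : List (Imag L N P), ∀ σ : ↥P ≃ ↥P, IsPAut L P σ → FixesImagSet σ B →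
    ∃ a' ∈ l, (Imag.map σ a).eqv a'

/-- The imaginary `a` is definable over the set `B` of imaginaries: it is fixed by every
automorphism of `𝒫` fixing `B`. -/
def DclImag (L : FirstOrder.Language) [L.Structure N] (P : Set N) (B : Set (Imag L N P))
    (a : Imag L N P) : Prop :=
  ∀ σ : ↥P ≃ ↥P, IsPAut L P σ → FixesImagSet σ B → (Imag.map σ a).eqv a

/-- Two finite tuples of imaginaries have the same type over `B` (in the saturated,
strongly homogeneous structure `𝒫`): some automorphism of `𝒫` fixing `B` carries
one to the other. -/
def SameTypeListOver (L : FirstOrder.Language) [L.Structure N] (P : Set N)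
    (B : Set (Imag L N P)) (l l' : List (Imag L N P)) : Prop :=
  ∃ σ : ↥P ≃ ↥P, IsPAut L P σ ∧ FixesImagSet σ B ∧
    List.Forall₂ Imag.eqv (l.map (Imag.map σ)) l'

/-- The trivial sort: `P` itself, i.e. `1`-tuples from `P` modulo equality. -/
def elemEqRel (L : FirstOrder.Language) [L.Structure N] {P : Set N}
    (hP : Set.Definable₁ (∅ : Set N) L P) : EqRel L N P where
  n := 1
  rel := {g | g (Sum.inl 0) = g (Sum.inr 0) ∧ g (Sum.inl 0) ∈ P}
  definable := by
    have e1 : Set.Definable (∅ : Set N) L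
        {g : (Fin 1 ⊕ Fin 1) → N | g (Sum.inl 0) = g (Sum.inr 0)} :=
      ⟨Term.equal (Term.var (Sum.inl 0)) (Term.var (Sum.inr 0)), by ext g; simp⟩
    have e2 := hP.preimage_comp (fun _ : Fin 1 => (Sum.inl 0 : Fin 1 ⊕ Fin 1))
    have he : {g : (Fin 1 ⊕ Fin 1) → N | g (Sum.inl 0) = g (Sum.inr 0) ∧ g (Sum.inl 0) ∈ P} =
        {g : (Fin 1 ⊕ Fin 1) → N | g (Sum.inl 0) = g (Sum.inr 0)} ∩
        ((fun g : (Fin 1 ⊕ Fin 1) → N =>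
          g ∘ (fun _ : Fin 1 => (Sum.inl 0 : Fin 1 ⊕ Fin 1))) ⁻¹'
            {x : Fin 1 → N | x 0 ∈ P}) := by
      ext g
      simp [Set.mem_preimage, Function.comp]
    rw [he]
    exact e1.inter e2
  mem_P := by
    rintro g ⟨heq, hmem⟩ i
    rcases i with i | i
    · rwa [Subsingleton.elim i 0]
    · rw [Subsingleton.elim i 0, ← heq]; exact hmem
  refl := fun f hf => ⟨rfl, hf 0⟩
  symm := fun f g hfg => ⟨hfg.1.symm, hfg.1 ▸ hfg.2⟩
  trans := fun f g h h1 h2 => ⟨h1.1.trans h2.1, h1.2⟩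

/-- A (real) element of `P`, regarded as an imaginary. -/
def Imag.ofElem (hP : Set.Definable₁ (∅ : Set N) L P) (x : N) (hx : x ∈ P) : Imag L N P :=
  ⟨elemEqRel L hP, fun _ => x, fun _ => hx⟩

/-- A subset of `P`, regarded as a set of imaginaries. -/
def ofElemSet (hP : Set.Definable₁ (∅ : Set N) L P) (A : Set N) (hA : A ⊆ P) :
    Set (Imag L N P) :=
  {i | ∃ (x : N) (hx : x ∈ A), i = Imag.ofElem hP x (hA hx)}

/-! ### Finite rank (Definition 1.3) -/

/-- Th(`𝒫`) has *finite rank*: an assignment of a nonnegative integer `rk(ā/B)` to each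
finite tuple `ā` of imaginaries and each set `B` of imaginaries, depending only on
`tp(ā, B)`, which is additive and symmetric on pairs, vanishes exactly on algebraic
elements, admits rank-preserving nonforking extensions, and is bounded on each sort. -/
structure FiniteRankData (L : FirstOrder.Language) (N : Type) [L.Structure N] (P : Set N) where
  rk : List (Imag L N P) → Set (Imag L N P) → ℕ
  /-- `rk` is well defined on equivalence classes of representatives. -/
  rk_congr : ∀ l l' B, List.Forall₂ Imag.eqv l l' → rk l B = rk l' B
  /-- `rk(ā/B)` depends only on `tp(ā, B)`: it is invariant under automorphisms of `𝒫`. -/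
  rk_invariant : ∀ σ : ↥P ≃ ↥P, IsPAut L P σ → ∀ l B,
    rk (l.map (Imag.map σ)) (Imag.map σ '' B) = rk l B
  /-- (i) `rk(a,b/C) = rk(b,a/C)`. -/
  rk_symm : ∀ a b C, rk [a, b] C = rk [b, a] C
  /-- (i) `rk(a,b/C) = rk(a/b,C) + rk(b/C)`. -/
  rk_add : ∀ a b C, rk [a, b] C = rk [a] (insert b C) + rk [b] C
  /-- (ii) `rk(a/B) = 0` iff `a ∈ acl(B)`. -/
  rk_zero_iff : ∀ a B, rk [a] B = 0 ↔ AclImag L P B a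
  /-- (iii) every type has a rank-preserving extension to any larger parameter set. -/
  rk_ext : ∀ l B C, B ⊆ C → ∃ l', SameTypeListOver L P B l' l ∧ rk l' C = rk l B
  /-- (iv) on each sort of `𝒫^eq` the rank is bounded. -/
  rk_bounded : ∀ Z : EqRel L N P, ∃ k : ℕ, ∀ a : Imag L N P, a.E = Z → rk [a] ∅ ≤ k

/-! ### Types, indiscernibles and forking inside the induced structure `𝒫` -/

/-- Two tuples from `P` have the same type in the induced structure `𝒫` over `A ⊆ P`:
the formulas of `𝒫` are (interpreted by) the subsets of the `Pⁿ` that are `∅`-definable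
in `N`. -/
def SameTypePOver (L : FirstOrder.Language) [L.Structure N] (A : Set N) {α : Type}
    (a a' : α → N) : Prop :=
  ∀ (m : ℕ) (D : Set ((α ⊕ Fin m) → N)), Set.Definable (∅ : Set N) L D →
    ∀ b : Fin m → N, (∀ i, b i ∈ A) → (Sum.elim a b ∈ D ↔ Sum.elim a' b ∈ D)

/-- A sequence of tuples from `P` is indiscernible over `A` in the structure `𝒫`. -/
def IndiscernibleOverP (L : FirstOrder.Language) [L.Structure N] (A : Set N) {m : ℕ}
    (bs : ℕ → Fin m → N) : Prop :=
  ∀ (n : ℕ) (f g : Fin n → ℕ), StrictMono f → StrictMono g →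
    SameTypePOver L A (fun p : Fin n × Fin m => bs (f p.1) p.2)
      (fun p : Fin n × Fin m => bs (g p.1) p.2)

/-- The formula (of `𝒫`) `D(x, b)` divides over `A` in `𝒫`: there is an `A`-indiscernible
sequence `(bᵢ)` in `𝒫` with `b₀ = b` such that `{D(x, bᵢ) : i < ω}` is inconsistent. -/
def DividesP (L : FirstOrder.Language) [L.Structure N] (P : Set N) {α : Type} {m : ℕ}
    (D : Set ((α ⊕ Fin m) → N)) (b : Fin m → N) (A : Set N) : Prop :=
  Set.Definable (∅ : Set N) L D ∧ (∀ i, b i ∈ P) ∧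
  ∃ bs : ℕ → Fin m → N, bs 0 = b ∧ (∀ i j, bs i j ∈ P) ∧ IndiscernibleOverP L A bs ∧
    ∃ F : Finset ℕ, ¬ ∃ x : α → N, (∀ i, x i ∈ P) ∧ ∀ i ∈ F, Sum.elim x (bs i) ∈ D

/-- A definable (in `𝒫`) set forks over `A`: it implies a finite disjunction of formulas
of `𝒫`, each of which divides over `A`. -/
def SetForksOverP (L : FirstOrder.Language) [L.Structure N] (P : Set N) {α : Type}
    (s : Set (α → N)) (A : Set N) : Prop :=
  ∃ (J : ℕ) (m : Fin J → ℕ) (D : ∀ j, Set ((α ⊕ Fin (m j)) → N)) (b : ∀ j, Fin (m j) → N),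
    (∀ j, DividesP L P (D j) (b j) A) ∧ ∀ x ∈ s, ∃ j, Sum.elim x (b j) ∈ D j

/-- The index type for the concatenation of the representatives of a finite tuple of
imaginaries. -/
def repIndex (c : List (Imag L N P)) : Type := Σ i : Fin c.length, Fin (c.get i).E.n

/-- The concatenated representatives of a finite tuple of imaginaries. -/
def reps (c : List (Imag L N P)) : repIndex c → N := fun p => (c.get p.1).rep p.2

/-- `D` (a formula of `𝒫` whose second block of variables stands for representatives of
the imaginaries `c`) is invariant under replacing representatives by equivalent ones; i.e.
it genuinely has the tuple of imaginaries `c` as its parameters. -/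
def RespectsImags {α : Type} (c : List (Imag L N P)) (D : Set ((α ⊕ repIndex c) → N)) : Prop :=
  ∀ (x : α → N) (s s' : repIndex c → N),
    (∀ i : Fin c.length, Sum.elim (fun j => s ⟨i, j⟩) (fun j => s' ⟨i, j⟩) ∈ (c.get i).E.rel) →
    (Sum.elim x s ∈ D ↔ Sum.elim x s' ∈ D)

/-- `tp(a/M₀c)` forks over `M₀` in the structure `𝒫`, where `c` is a finite tuple of
imaginaries: some formula over `M₀c` satisfied by `a` implies a finite disjunction of
formulas each dividing over `M₀`. -/
def TypeForksOverPImag (L : FirstOrder.Language) [L.Structure N] (P : Set N) (a : N)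
    (M₀ : Set N) (c : List (Imag L N P)) : Prop :=
  ∃ (m : ℕ) (D : Set (((Fin 1 ⊕ Fin m) ⊕ repIndex c) → N)) (b : Fin m → N),
    Set.Definable (∅ : Set N) L D ∧ RespectsImags c D ∧ (∀ i, b i ∈ M₀) ∧
    Sum.elim (Sum.elim (fun _ => a) b) (reps c) ∈ D ∧
    SetForksOverP L P {x : Fin 1 → N | x 0 ∈ P ∧ Sum.elim (Sum.elim x b) (reps c) ∈ D} M₀

/-! ### Definable functions into a sort of `𝒫^eq` -/

/-- A function `f : P → Z` (for `Z` a sort of `𝒫^eq`) definable in `N` with parameters,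
presented by its graph `{(x, r) : r is a representative of f(x)}`. -/
structure DefFnToSort (L : FirstOrder.Language) [L.Structure N] (P : Set N)
    (Z : EqRel L N P) where
  graph : Set ((Fin 1 ⊕ Fin Z.n) → N)
  definable : (univ : Set N).Definable L graph
  dom : ∀ g ∈ graph, g (Sum.inl 0) ∈ P ∧ ∀ j, g (Sum.inr j) ∈ P
  total : ∀ x ∈ P, ∃ r : Fin Z.n → N, Sum.elim (fun _ => x) r ∈ graph
  functional : ∀ (x : N) (r r' : Fin Z.n → N), Sum.elim (fun _ => x) r ∈ graph →
    Sum.elim (fun _ => x) r' ∈ graph → Sum.elim r r' ∈ Z.rel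
  saturated : ∀ (x : N) (r r' : Fin Z.n → N), Sum.elim (fun _ => x) r ∈ graph →
    Sum.elim r r' ∈ Z.rel → Sum.elim (fun _ => x) r' ∈ graph

/-- A relation `R(x, z)` between `P` and the sort `Z` is well defined on `Z`-classes. -/
def RespectsZ (Z : EqRel L N P) (R : Set ((Fin 1 ⊕ Fin Z.n) → N)) : Prop :=
  ∀ (x : N) (r r' : Fin Z.n → N), Sum.elim r r' ∈ Z.rel →
    (Sum.elim (fun _ => x) r ∈ R ↔ Sum.elim (fun _ => x) r' ∈ R)

/-- The conclusion of Lemma 3.2: `R(x,z)` is a relation between `P` and the sort `Z`,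
definable in `N` with parameters from `P`, such that
`N ⊨ (∀ x ∈ P)(R(x, f(x)) ∧ (∃^{≤k} z ∈ Z) R(x, z))`. -/
def IsKApprox (L : FirstOrder.Language) [L.Structure N] (P : Set N) (Z : EqRel L N P)
    (f : DefFnToSort L P Z) (R : Set ((Fin 1 ⊕ Fin Z.n) → N)) (k : ℕ) : Prop :=
  P.Definable L R ∧
  (∀ g ∈ R, g (Sum.inl 0) ∈ P ∧ ∀ j, g (Sum.inr j) ∈ P) ∧
  RespectsZ Z R ∧
  (∀ x ∈ P, ∀ r : Fin Z.n → N, Sum.elim (fun _ => x) r ∈ f.graph →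
    Sum.elim (fun _ => x) r ∈ R) ∧
  (∀ x ∈ P, ∃ t : Fin k → Fin Z.n → N, (∀ i j, t i j ∈ P) ∧
    ∀ r : Fin Z.n → N, Sum.elim (fun _ => x) r ∈ R → ∃ i, Sum.elim r (t i) ∈ Z.rel)

/-- `M₀` is a (small) elementary substructure of the induced structure `𝒫`
(Tarski–Vaught test with respect to all `∅`-definable relations). -/
def ElemSubP (L : FirstOrder.Language) [L.Structure N] (P M₀ : Set N) : Prop :=
  M₀ ⊆ P ∧ M₀.Nonempty ∧
  ∀ (k : ℕ) (D : Set ((Fin 1 ⊕ Fin k) → N)), Set.Definable (∅ : Set N) L D →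
    ∀ b : Fin k → N, (∀ i, b i ∈ M₀) →
      (∃ x ∈ P, Sum.elim (fun _ => x) b ∈ D) → ∃ x ∈ M₀, Sum.elim (fun _ => x) b ∈ D

/-!
Induction on `n`, writing a definable `X ⊆ P^{1+n}` as the family of its fibres `X_a ⊆ Pⁿ`,
`a ∈ P`. Each fibre is coded in `P` by induction; by saturation finitely many formulas suffice,
and two distinct points of `P` let one merge them into one `∅`-definable family `Θ(t, x)`
with parameters `t` from `P`. Identifying parameters that define the same set gives a sort `Z`
of `𝒫^eq`, and `a ↦ [t_a]` is a definable function `P → Z`. Its graph is coded in `P`, hence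
so is `X = {(a, x) | ∃ t, (a, t) ∈ graph ∧ Θ(t, x)}`. When `N` is finite or `P` has at most
one point, `X` is finite and coded pointwise.
-/

section Definability

variable {A : Set N} {α β γ : Type*}

lemma _root_.Set.Definable.preimage_sumElim {S : Set ((α ⊕ β) → N)} (hS : A.Definable L S)
    (f : α → γ) (g : β → γ) :
    A.Definable L {v : γ → N | Sum.elim (v ∘ f) (v ∘ g) ∈ S} := by
  have := hS.preimage_comp (Sum.elim f g)
  simp only [Sum.comp_elim] at this
  exact this

lemma _root_.Set.Definable.preimage_sumElim_const [Finite α] [Finite β] {S : Set ((α ⊕ β) → N)}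
    (hS : A.Definable L S) {b : α → N} (hb : ∀ i, b i ∈ A) :
    A.Definable L (Sum.elim b ⁻¹' S) :=
  hS.preimage_map fun
    | .inl i => L.definableFun_const _ (hb i)
    | .inr j => DefinableFun.proj L (i := j)

lemma definable_forall_mem [Finite α] (hP : A.Definable₁ L P) :
    A.Definable L {x : α → N | ∀ i, x i ∈ P} := by
  rw [ofPred_forall]
  exact definable_iInter_of_finite fun i => hP.preimage_comp fun _ => i

lemma definable_singleton [Finite α] {g : α → N} (hg : ∀ i, g i ∈ A) :
    A.Definable L {g} := by
  have : ({g} : Set (α → N)) = ⋂ i, {x | x i = g i} := by ext; simp [funext_iff]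
  rw [this]
  exact definable_iInter_of_finite fun i => (DefinableFun.proj L).ofPred_eq_const (hg i)

lemma definable_of_finite [Finite α] {s : Set (α → N)} (hs : s.Finite)
    (hsP : ∀ f ∈ s, ∀ i, f i ∈ P) : P.Definable L s := by
  have := hs.to_subtype
  rw [← iUnion_of_singleton_coe s]
  exact definable_iUnion_of_finite fun g => definable_singleton (hsP g g.2)

lemma exists_definable_params {s : Set (α → N)} (hs : A.Definable L s) :
    ∃ (k : ℕ) (S : Set ((Fin k ⊕ α) → N)) (b : Fin k → N),
      (∅ : Set N).Definable L S ∧ (∀ i, b i ∈ A) ∧ s = Sum.elim b ⁻¹' S := by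
  obtain ⟨A₀, hA₀, hs⟩ := definable_iff_finitely_definable.mp hs
  obtain ⟨φ, rfl⟩ := definable_iff_exists_formula_sum.mp hs
  let e := Fintype.equivFin (A₀ : Set N)
  refine ⟨_, {w | φ.Realize (Sum.elim (w ∘ Sum.inl ∘ e) (w ∘ Sum.inr))},
    fun i => e.symm i, (empty_definable_iff.mpr ⟨φ, rfl⟩).preimage_sumElim _ _,
    fun i => hA₀ (e.symm i).2, ?_⟩
  ext v
  simp [Function.comp_def]

lemma definable_setOf_preimage_eq [Finite γ] {S : Set ((α ⊕ γ) → N)} {T : Set ((β ⊕ γ) → N)}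
    (hS : A.Definable L S) (hT : A.Definable L T) :
    A.Definable L
      {g : (α ⊕ β) → N | Sum.elim (g ∘ Sum.inl) ⁻¹' S = Sum.elim (g ∘ Sum.inr) ⁻¹' T} := by
  have hS' := hS.preimage_sumElim (Sum.inl ∘ Sum.inl : α → (α ⊕ β) ⊕ γ) Sum.inr
  have hT' := hT.preimage_sumElim (Sum.inl ∘ Sum.inr : β → (α ⊕ β) ⊕ γ) Sum.inr
  convert ((hS'.inter hT').union (hS'.compl.inter hT'.compl)).forall_of_finite (β := γ) using 1
  ext g
  simp only [Set.ext_iff, mem_preimage, mem_ofPred_eq, mem_union, mem_inter_iff, mem_compl_iff]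
  exact forall_congr' fun x => by tauto

end Definability

def DefinableSubsetsCoded (L : FirstOrder.Language) [L.Structure N] (P : Set N) (α : Type*) :
    Prop :=
  ∀ s : Set (α → N), (univ : Set N).Definable L s → (∀ f ∈ s, ∀ i, f i ∈ P) → P.Definable L s

lemma DefinableSubsetsCoded.of_equiv {α β : Type*} (h : DefinableSubsetsCoded L P α)
    (e : α ≃ β) : DefinableSubsetsCoded L P β := by
  intro s hs hsP
  have hs' := h ((fun g : α → N => g ∘ e.symm) ⁻¹' s) (hs.preimage_comp e.symm)
    fun g hg i => by simpa using hsP _ hg (e i)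
  convert hs'.preimage_comp e using 1
  ext f
  simp [Function.comp_def]

lemma definableSubsetsCoded_of_finite {α : Type*} [Finite α] [Finite (α → N)] :
    DefinableSubsetsCoded L P α :=
  fun s _ hsP => definable_of_finite s.toFinite hsP

lemma definableSubsetsCoded_of_subsingleton {α : Type*} [Finite α] (hP : P.Subsingleton) :
    DefinableSubsetsCoded L P α :=
  fun _ _ hsP => definable_of_finite
    (Set.Subsingleton.finite fun f hf g hg => funext fun i => hP (hsP f hf i) (hsP g hg i)) hsP

lemma IsSaturated.exists_finset_cover (hsat : IsSaturated (N := N) L) [Infinite N] {ι : Type*}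
    {m : ℕ} {D : ι → Set ((Fin 1 ⊕ Fin m) → N)} (hD : ∀ i, (∅ : Set N).Definable L (D i))
    (b : Fin m → N) (hcover : ∀ a, ∃ i, Sum.elim (fun _ => a) b ∈ D i) :
    ∃ F : Finset ι, ∀ a, ∃ i ∈ F, Sum.elim (fun _ => a) b ∈ D i := by
  classical
  choose ψ hψ using fun i => empty_definable_iff.mp (hD i).compl
  let q : ι → Σ k : ℕ, L.Formula (Fin 1 ⊕ Fin k) × (Fin k → N) := fun i => ⟨m, ψ i, b⟩
  have hcard : #(range b) < #N := (lt_aleph0_of_finite _).trans_le (aleph0_le_mk N)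
  have hq : ∀ a i, (q i).2.1.Realize (Sum.elim (fun _ => a) (q i).2.2) ↔
      Sum.elim (fun _ => a) b ∉ D i := fun a i => by
    rw [← mem_compl_iff, hψ i]; rfl
  by_contra! hF
  obtain ⟨a, ha⟩ := hsat (range b) hcard (range q) (by rintro _ ⟨i, rfl⟩ j; exact ⟨j, rfl⟩)
    fun F hF' => by
      obtain ⟨G, -, rfl⟩ := Finset.subset_set_image_iff.mp (image_univ (f := q) ▸ hF')
      obtain ⟨a, ha⟩ := hF G
      exact ⟨a, by simpa [hq] using ha⟩
  obtain ⟨i, hi⟩ := hcover a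
  exact (hq a i).mp (ha _ ⟨i, rfl⟩) hi

lemma exists_uniform_family_of_finite {ι : Type*} [Finite ι] {β : Type*} {p₀ p₁ : N}
    (hp₀ : p₀ ∈ P) (hp₁ : p₁ ∈ P) (hne : p₀ ≠ p₁) {r : ι → ℕ} {D : ∀ j, Set ((Fin (r j) ⊕ β) → N)}
    (hD : ∀ j, (∅ : Set N).Definable L (D j)) :
    ∃ (m : ℕ) (Θ : Set ((Fin m ⊕ β) → N)), (∅ : Set N).Definable L Θ ∧
      ∀ j (c : Fin (r j) → N), (∀ i, c i ∈ P) →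
        ∃ t : Fin m → N, (∀ i, t i ∈ P) ∧ Sum.elim t ⁻¹' Θ = Sum.elim c ⁻¹' D j := by
  classical
  have := Fintype.ofFinite ι
  -- A parameter selects `D j` when it differs at the slot `sel (some j)` from the reference slot
  -- `sel none`; the witness `t` below selects `j` only, which needs two distinct points of `P`.
  let e := Fintype.equivFin ((Σ j, Fin (r j)) ⊕ Option ι)
  let sel : Option ι → Fin _ ⊕ β := fun o => Sum.inl (e (Sum.inr o))
  refine ⟨_, ⋃ j, {v | v (sel (some j)) ≠ v (sel none)} ∩
      {v | Sum.elim (v ∘ fun i => Sum.inl (e (Sum.inl ⟨j, i⟩))) (v ∘ Sum.inr) ∈ D j},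
    definable_iUnion_of_finite fun j =>
      ((DefinableFun.proj L).ofPred_eq (DefinableFun.proj L)).compl.inter
        ((hD j).preimage_sumElim _ _), fun j c hc => ?_⟩
  let t : (Σ j, Fin (r j)) ⊕ Option ι → N := Sum.elim
    (fun p => Function.update (β := fun j => Fin (r j) → N) (fun _ _ => p₀) j c p.1 p.2)
    (fun o => if o = some j then p₁ else p₀)
  have ht : ∀ y, t y ∈ P := by
    rintro (⟨j', i⟩ | o)
    · by_cases h : j' = j
      · subst h; simpa [t] using hc i
      · simpa [t, h] using hp₀
    · by_cases h : o = some j <;> simp [t, h, hp₀, hp₁]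
  refine ⟨t ∘ e.symm, fun i => ht _, ?_⟩
  ext x
  simp [sel, t, Function.comp_def, hne.symm]

section UniformFamily

variable {β : Type*} [Finite β] {m : ℕ} {Θ : Set ((Fin m ⊕ β) → N)}

def EqRel.ofFamily (hP : Set.Definable₁ (∅ : Set N) L P) (hΘ : (∅ : Set N).Definable L Θ) :
    EqRel L N P where
  n := m
  rel := {g | (∀ i, g i ∈ P) ∧ Sum.elim (g ∘ Sum.inl) ⁻¹' Θ = Sum.elim (g ∘ Sum.inr) ⁻¹' Θ}
  definable := (definable_forall_mem hP).inter (definable_setOf_preimage_eq hΘ hΘ)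
  mem_P _ hg := hg.1
  refl _ hf := ⟨Sum.forall.2 ⟨hf, hf⟩, rfl⟩
  symm _ _ h := ⟨Sum.forall.2 ⟨fun i => h.1 (.inr i), fun i => h.1 (.inl i)⟩, h.2.symm⟩
  trans _ _ _ h h' := ⟨Sum.forall.2 ⟨fun i => h.1 (.inl i), fun i => h'.1 (.inr i)⟩, h.2.trans h'.2⟩

variable {s : Set ((Fin 1 ⊕ β) → N)}

/-- The function `a ↦ c_a` of the paper, sending `a` to the class of parameters `t` with
`Θ(t, ·) = s_a`. -/
def DefFnToSort.fiberCode (hP : Set.Definable₁ (∅ : Set N) L P) (hΘ : (∅ : Set N).Definable L Θ)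
    (hs : (univ : Set N).Definable L s)
    (hfib : ∀ a ∈ P, ∃ t : Fin m → N, (∀ i, t i ∈ P) ∧
      Sum.elim (fun _ => a) ⁻¹' s = Sum.elim t ⁻¹' Θ) :
    DefFnToSort L P (EqRel.ofFamily hP hΘ) where
  graph := {g | g (Sum.inl 0) ∈ P ∧ (∀ i, g (Sum.inr i) ∈ P) ∧
    Sum.elim (g ∘ Sum.inl) ⁻¹' s = Sum.elim (g ∘ Sum.inr) ⁻¹' Θ}
  definable := (hP.mono (empty_subset _) |>.preimage_comp fun _ => Sum.inl 0).inter
    (((definable_forall_mem hP).mono (empty_subset _) |>.preimage_comp Sum.inr).inter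
      (definable_setOf_preimage_eq hs (hΘ.mono (empty_subset _))))
  dom _ hg := ⟨hg.1, hg.2.1⟩
  total a ha := (hfib a ha).imp fun _ ht => ⟨ha, ht⟩
  functional _ _ _ h h' := ⟨Sum.forall.2 ⟨h.2.1, h'.2.1⟩, h.2.2.symm.trans h'.2.2⟩
  saturated _ _ _ h h' := ⟨h.1, fun i => h'.1 (.inr i), h.2.2.trans h'.2⟩

lemma definable_of_uniform_fibers (hP : Set.Definable₁ (∅ : Set N) L P)
    (hfn : ∀ (Z : EqRel L N P) (f : DefFnToSort L P Z), P.Definable L f.graph)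
    (hΘ : (∅ : Set N).Definable L Θ) (hs : (univ : Set N).Definable L s)
    (hsP : ∀ f ∈ s, ∀ i, f i ∈ P)
    (hfib : ∀ a ∈ P, ∃ t : Fin m → N, (∀ i, t i ∈ P) ∧
      Sum.elim (fun _ => a) ⁻¹' s = Sum.elim t ⁻¹' Θ) :
    P.Definable L s := by
  let f := DefFnToSort.fiberCode hP hΘ hs hfib
  have hs_eq : s = {v | (∀ i, v i ∈ P) ∧
      ∃ t : Fin m → N, Sum.elim (v ∘ Sum.inl) t ∈ f.graph ∧ Sum.elim t (v ∘ Sum.inr) ∈ Θ} := by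
    ext v
    have hv : v ∘ Sum.inl = fun _ => v (Sum.inl 0) :=
      funext fun i => by rw [Fin.fin_one_eq_zero i]; rfl
    constructor
    · intro hvs
      obtain ⟨t, htP, hfiber⟩ := hfib _ (hsP v hvs (Sum.inl 0))
      rw [← hv] at hfiber
      refine ⟨hsP v hvs, t, ⟨hsP v hvs _, htP, hfiber⟩, ?_⟩
      show v ∘ Sum.inr ∈ Sum.elim t ⁻¹' Θ
      rwa [← hfiber, mem_preimage, Sum.elim_comp_inl_inr]
    · rintro ⟨-, t, ⟨-, -, hfiber⟩, hvt⟩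
      have : v ∘ Sum.inr ∈ Sum.elim (v ∘ Sum.inl) ⁻¹' s := hfiber ▸ hvt
      rwa [mem_preimage, Sum.elim_comp_inl_inr] at this
  rw [hs_eq]
  exact ((definable_forall_mem hP).mono (empty_subset _)).inter
    (((hfn _ f).preimage_sumElim (Sum.inl ∘ Sum.inl) Sum.inr).inter
      ((hΘ.mono (empty_subset _)).preimage_sumElim Sum.inr (Sum.inl ∘ Sum.inr))).exists_of_finite

end UniformFamily

lemma exists_uniform_fibers (hsat : IsSaturated (N := N) L) [Infinite N]
    (hP : Set.Definable₁ (∅ : Set N) L P) {p₀ p₁ : N} (hp₀ : p₀ ∈ P) (hp₁ : p₁ ∈ P)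
    (hne : p₀ ≠ p₁) {β : Type*} [Finite β] (hβ : DefinableSubsetsCoded L P β)
    {s : Set ((Fin 1 ⊕ β) → N)} (hs : (univ : Set N).Definable L s)
    (hsP : ∀ f ∈ s, ∀ i, f i ∈ P) :
    ∃ (m : ℕ) (Θ : Set ((Fin m ⊕ β) → N)), (∅ : Set N).Definable L Θ ∧
      ∀ a ∈ P, ∃ t : Fin m → N, (∀ i, t i ∈ P) ∧
        Sum.elim (fun _ => a) ⁻¹' s = Sum.elim t ⁻¹' Θ := by
  obtain ⟨k, S, b, hS, -, rfl⟩ := exists_definable_params hs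
  let S' : Set (((Fin 1 ⊕ Fin k) ⊕ β) → N) :=
    {G | Sum.elim (G ∘ Sum.inl ∘ Sum.inr) (Sum.elim (G ∘ Sum.inl ∘ Sum.inl) (G ∘ Sum.inr)) ∈ S}
  have hS' : (∅ : Set N).Definable L S' := by
    have := hS.preimage_comp
      (Sum.elim (Sum.inl ∘ Sum.inr) (Sum.elim (Sum.inl ∘ Sum.inl) Sum.inr))
    simp only [Sum.comp_elim] at this
    exact this
  let ι := Σ r : ℕ, {D : Set ((Fin r ⊕ β) → N) // (∅ : Set N).Definable L D}
  let T : ι → Set ((Fin 1 ⊕ Fin k) → N) := fun d => {h | h (Sum.inl 0) ∈ P →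
    ∃ c : Fin d.1 → N, (∀ i, c i ∈ P) ∧ Sum.elim h ⁻¹' S' = Sum.elim c ⁻¹' d.2.1}
  have hT : ∀ d, (∅ : Set N).Definable L (T d) := fun d =>
    (hP.preimage_comp fun _ => Sum.inl 0).himp
      (((definable_forall_mem hP).preimage_comp Sum.inr).inter
        (definable_setOf_preimage_eq hS' d.2.2)).exists_of_finite
  have hcover : ∀ a, ∃ d, Sum.elim (fun _ => a) b ∈ T d := by
    intro a
    by_cases ha : a ∈ P
    · obtain ⟨r, D, c, hD, hc, hfiber⟩ := exists_definable_params <|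
        hβ _ (hs.preimage_sumElim_const fun _ => mem_univ a) fun x hx i => hsP _ hx (.inr i)
      exact ⟨⟨r, D, hD⟩, fun _ => ⟨c, hc, hfiber⟩⟩
    · exact ⟨⟨0, ∅, definable_empty⟩, fun h => (ha h).elim⟩
  obtain ⟨F, hF⟩ := hsat.exists_finset_cover hT b hcover
  obtain ⟨m, Θ, hΘ, hΘD⟩ := exists_uniform_family_of_finite (ι := F) hp₀ hp₁ hne
    (D := fun d => d.1.2.1) fun d => d.1.2.2
  refine ⟨m, Θ, hΘ, fun a ha => ?_⟩
  obtain ⟨d, hdF, hd⟩ := hF a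
  obtain ⟨c, hc, hfiber⟩ := hd ha
  obtain ⟨t, ht, hΘt⟩ := hΘD ⟨d, hdF⟩ c hc
  exact ⟨t, ht, hfiber.trans hΘt.symm⟩

lemma DefinableSubsetsCoded.fin_one_sum (hsat : IsSaturated (N := N) L)
    (hP : Set.Definable₁ (∅ : Set N) L P)
    (hfn : ∀ (Z : EqRel L N P) (f : DefFnToSort L P Z), P.Definable L f.graph)
    {β : Type*} [Finite β] (hβ : DefinableSubsetsCoded L P β) :
    DefinableSubsetsCoded L P (Fin 1 ⊕ β) := by
  rcases finite_or_infinite N with hN | hN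
  · exact definableSubsetsCoded_of_finite
  by_cases hPs : P.Subsingleton
  · exact definableSubsetsCoded_of_subsingleton hPs
  obtain ⟨p₀, hp₀, p₁, hp₁, hne⟩ := not_subsingleton_iff.mp hPs
  intro s hs hsP
  obtain ⟨m, Θ, hΘ, hfib⟩ := exists_uniform_fibers hsat hP hp₀ hp₁ hne hβ hs hsP
  exact definable_of_uniform_fibers hP hfn hΘ hs hsP hfib

theorem stablyEmbedded_of_oneStablyEmbedded_of_functions_coded_general
    (hsat : IsSaturated (N := N) L) (P : Set N)
    (hPdef : Set.Definable₁ (∅ : Set N) L P)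
    (hfn : ∀ (Z : EqRel L N P) (f : DefFnToSort L P Z), P.Definable L f.graph) :
    StablyEmbedded L P := by
  show ∀ n, DefinableSubsetsCoded L P (Fin n)
  intro n
  induction n with
  | zero => exact definableSubsetsCoded_of_finite
  | succ n ih =>
    exact (ih.fin_one_sum hsat hPdef hfn).of_equiv ((Equiv.sumComm _ _).trans finSumFinEquiv)

/-- (Proof of Theorem 1.4 from Proposition 3.1: the inductive step.)  Let `T` be a complete
theory, `N` a saturated model of `T`, and `P` a `∅`-definable set in `N` which is `1`-stably
embedded in `N` and such that every definable (with parameters in `N`) function from `P` to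
a sort `Z` of `𝒫^eq` is coded in `P`.  Then for every `n`, every subset of `Pⁿ` definable
in `N` with parameters is coded in `P`; that is, `P` is stably embedded in `N`. -/
theorem stablyEmbedded_of_oneStablyEmbedded_of_functions_coded
    (hsat : IsSaturated (N := N) L) (P : Set N)
    (hPdef : Set.Definable₁ (∅ : Set N) L P)
    (h1 : OneStablyEmbedded L P)
    (hfn : ∀ (Z : EqRel L N P) (f : DefFnToSort L P Z), P.Definable L f.graph) :
    StablyEmbedded L P :=
  stablyEmbedded_of_oneStablyEmbedded_of_functions_coded_general hsat P hPdef hfn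

end StablyEmbeddedPaper
end
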